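/- arXiv:0910.3926 — 6 statements merged into one kernel-verified Lean document; each statement's English description precedes it below -/
import Mathlib

section
/- For every pair of positive integers k and r there exists a positive integer HJ(k, r) such that for every n ≥ HJ(k, r) and every r-colouring of [k]^n there is a monochromatic combinatorial line. -/
/-- The point of a combinatorial line (with wildcard set `W` and fixed values `x`)
obtained by setting all wildcard coordinates equal to `j`. -/
def linePt {n k : ℕ} (W : Finset (Fin n)) (x : Fin n → Fin k) (j : Fin k) :
    Fin n → Fin k :=
  fun i => if i ∈ W then j else x i

/-!
By `Combinatorics.Line.exists_mono_in_high_dimension` the theorem holds in some finite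
dimension `ι`. A line in `ι → α` extends along any embedding `ι ↪ ι'` to a line in `ι' → α`
by fixing the new coordinates to a constant, so monochromatic lines persist in every larger
dimension. A Mathlib line `l` is the line of the statement whose wildcard set is
`{i | l.idxFun i = none}` and whose fixed values are those of any of its points.
-/

namespace Combinatorics.Line

variable {α ι ι' κ : Type*}

noncomputable def extend (l : Line α ι) (f : ι ↪ ι') (a : α) : Line α ι' where
  idxFun := Function.extend f l.idxFun fun _ => some a
  proper := ⟨f l.proper.choose, by rw [f.injective.extend_apply, l.proper.choose_spec]⟩

theorem extend_apply (l : Line α ι) (f : ι ↪ ι') (a x : α) :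
    l.extend f a x = Function.extend f (l x) fun _ => a :=
  funext fun i => Function.apply_extend (fun o => o.getD x) f (fun _ => some a) i

theorem exists_mono_of_embedding (f : ι ↪ ι') (a : α)
    (h : ∀ C : (ι → α) → κ, ∃ l : Line α ι, l.IsMono C) (C : (ι' → α) → κ) :
    ∃ l : Line α ι', l.IsMono C := by
  obtain ⟨l, c, hc⟩ := h fun v => C (Function.extend f v fun _ => a)
  exact ⟨l.extend f a, c, fun x => extend_apply l f a x ▸ hc x⟩

def wildcards [Fintype ι] [DecidableEq α] (l : Line α ι) : Finset ι :=
  {i | l.idxFun i = none}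

theorem wildcards_nonempty [Fintype ι] [DecidableEq α] (l : Line α ι) : l.wildcards.Nonempty :=
  ⟨l.proper.choose, Finset.mem_filter.2 ⟨Finset.mem_univ _, l.proper.choose_spec⟩⟩

theorem linePt_wildcards {n k : ℕ} (l : Line (Fin k) (Fin n)) (a j : Fin k) :
    linePt l.wildcards (l a) j = l j := by
  funext i
  cases hi : l.idxFun i <;> simp [linePt, wildcards, hi]

end Combinatorics.Line

theorem hales_jewett_general (k r : ℕ) (hk : 0 < k) :
    ∃ N : ℕ, 0 < N ∧ ∀ n : ℕ, N ≤ n → ∀ κ : (Fin n → Fin k) → Fin r,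
      ∃ (W : Finset (Fin n)) (x : Fin n → Fin k) (c : Fin r),
        W.Nonempty ∧ ∀ j : Fin k, κ (linePt W x j) = c := by
  obtain ⟨ι, _, hι⟩ := Combinatorics.Line.exists_mono_in_high_dimension (Fin k) (Fin r)
  refine ⟨Fintype.card ι + 1, Nat.succ_pos _, fun n hn κ => ?_⟩
  obtain ⟨f⟩ : Nonempty (ι ↪ Fin n) :=
    Function.Embedding.nonempty_of_card_le (by simp only [Fintype.card_fin]; omega)
  obtain ⟨l, c, hc⟩ := Combinatorics.Line.exists_mono_of_embedding f ⟨0, hk⟩ hι κ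
  exact ⟨l.wildcards, l ⟨0, hk⟩, c, l.wildcards_nonempty,
    fun j => by rw [l.linePt_wildcards, hc]⟩

/-- Hales–Jewett theorem: for all `k, r` there is `N` such that for all `n ≥ N`,
every `r`-colouring of `[k]^n` has a monochromatic combinatorial line. -/
theorem hales_jewett (k r : ℕ) (hk : 0 < k) (hr : 0 < r) :
    ∃ N : ℕ, 0 < N ∧ ∀ n : ℕ, N ≤ n → ∀ κ : (Fin n → Fin k) → Fin r,
      ∃ (W : Finset (Fin n)) (x : Fin n → Fin k) (c : Fin r),
        W.Nonempty ∧ ∀ j : Fin k, κ (linePt W x j) = c :=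
  hales_jewett_general k r hk
end

section
/- Let A be a subset of [2]^n of equal-slices density δ. Then the set of (possibly degenerate) combinatorial lines all of whose points lie in A, viewed as a subset of [3]^n via the correspondence between lines in [2]^n and points of [3]^n, has equal-slices density at least δ²(n+1)/(n+2). -/
open Finset

/-- The equal-slices probability of a single string `x ∈ [k]^n`: one first chooses
uniformly a `k`-tuple of nonnegative integers summing to `n` (there are
`(n+k-1).choose (k-1)` of them), then a uniformly random string with those
coordinate counts (there are `multinomial` many in the slice of `x`). -/
noncomputable def slicePr (k n : ℕ) (x : Fin n → Fin k) : ℝ :=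
  (((n + k - 1).choose (k - 1) : ℝ))⁻¹ *
    ((Nat.multinomial Finset.univ
      (fun j : Fin k => (Finset.univ.filter fun i => x i = j).card) : ℝ))⁻¹

/-- The equal-slices measure of a set `A ⊆ [k]^n`. -/
noncomputable def esDensity {k n : ℕ} (A : Finset (Fin n → Fin k)) : ℝ :=
  ∑ x ∈ A, slicePr k n x

/-- A point `y ∈ [3]^n` corresponds to a possibly degenerate line in `[2]^n`
(wildcard set `{i : y i = 3}`); `linePoint y j` is the point of that line obtained
by replacing all 3s by the value `j ∈ [2]`. -/
def linePoint {n : ℕ} (y : Fin n → Fin 3) (j : Fin 2) : Fin n → Fin 2 :=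
  fun i => if h : (y i : ℕ) < 2 then (⟨(y i : ℕ), h⟩ : Fin 2) else j

/-!
The equal-slices measure on `[k]^n` is the law of `x ∘ π⁻¹` for a uniform permutation `π` of
the coordinates and a uniform sorted word `x`: there is one sorted word per slice, and a string
`y` arises from exactly `∏ c, (#{i | y i = c})!` permutations. So `δ` is the average over `π` of
`#(A ∩ C_π) / (n + 1)`, where `C_π` is the maximal chain of points of `[2]^n` sorted by `π`, and
likewise for lines, whose `(n + 2).choose 2` sorted words live in `[3]^n` once the alphabet is
ordered as `1 < 3 < 2`. Two points `x ≤ x'` of `A ∩ C_π` span a line in `A` sorted by `π`, so a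
chain meeting `A` in `m` points carries at least `m² / 2` lines, and Cauchy–Schwarz over `π`
gives `(n + 1)² δ² ≤ 2 ((n + 2).choose 2)` times the density of lines.
-/

open Nat

theorem card_perm_monotone_comp_eq_prod_factorial {α : Type*} [LinearOrder α] [Fintype α]
    {n : ℕ} (x : Fin n → α) :
    #{π : Equiv.Perm (Fin n) | Monotone (x ∘ π)} = ∏ a, (#{i | x i = a})! := by
  -- `x ∘ π` is sorted iff it is the sorted word `x ∘ σ`: these `π` form a coset of the stabilizer
  set σ := Tuple.sort x
  have hσ : Monotone (x ∘ σ) := Tuple.monotone_sort x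
  have key : ∀ π : Equiv.Perm (Fin n), Monotone (x ∘ π) ↔ x ∘ (π * σ⁻¹ : Equiv.Perm _) = x := by
    intro π
    rw [Equiv.Perm.coe_mul, ← Function.comp_assoc, Equiv.Perm.inv_def, Equiv.comp_symm_eq]
    exact ⟨fun h => Tuple.unique_monotone h hσ, fun h => h ▸ hσ⟩
  have e : {π : Equiv.Perm (Fin n) // Monotone (x ∘ π)} ≃ {g : Equiv.Perm (Fin n) // x ∘ g = x} :=
    (Equiv.mulRight σ⁻¹).subtypeEquiv key
  rw [← Fintype.card_subtype, Fintype.card_congr e, DomMulAct.stabilizer_card]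
  simp only [Fintype.card_subtype]

theorem prod_factorial_card_fiber_mul_multinomial {ι κ : Type*} [Fintype ι] [Fintype κ]
    [DecidableEq κ] (x : ι → κ) :
    (∏ c, (#{i | x i = c})!) * multinomial univ (fun c => #{i | x i = c}) =
      (Fintype.card ι)! := by
  rw [multinomial_spec, ← card_eq_sum_card_fiberwise (fun i _ => mem_univ (x i)), Finset.card_univ]

section SortedWords

variable {k n : ℕ} {α : Type*} [LinearOrder α] [Fintype α]

theorem slicePr_eq_card_perm_monotone (e : Fin k ≃ α) (x : Fin n → Fin k) :
    slicePr k n x =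
      #{π : Equiv.Perm (Fin n) | Monotone (e ∘ x ∘ π)} / (n ! * (n + k - 1).choose (k - 1)) := by
  have hcard : #{π : Equiv.Perm (Fin n) | Monotone (e ∘ x ∘ π)} = ∏ c, (#{i | x i = c})! := by
    refine (card_perm_monotone_comp_eq_prod_factorial (e ∘ x)).trans ?_
    rw [← e.prod_comp]
    simp only [Function.comp_apply, e.apply_eq_iff_eq]
  have hspec := prod_factorial_card_fiber_mul_multinomial x
  rw [Fintype.card_fin] at hspec
  rw [slicePr, hcard, ← hspec]
  have := multinomial_pos univ (fun c => #{i | x i = c})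
  push_cast
  field_simp

theorem esDensity_eq_sum_card_monotone (e : Fin k ≃ α) (S : Finset (Fin n → Fin k)) :
    esDensity S = (∑ π : Equiv.Perm (Fin n), #{x ∈ S | Monotone (e ∘ x ∘ π)}) /
      (n ! * (n + k - 1).choose (k - 1)) := by
  simp_rw [esDensity, slicePr_eq_card_perm_monotone e, ← sum_div]
  congr 1
  exact_mod_cast (sum_card_bipartiteAbove_eq_sum_card_bipartiteBelow
    (r := fun x (π : Equiv.Perm (Fin n)) => Monotone (e ∘ x ∘ π)) (s := S) (t := univ))

end SortedWords

theorem sq_card_le_two_mul_card_filter_le {β : Type*} [Preorder β] [DecidableLE β]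
    {M : Finset β} (hM : IsChain (· ≤ ·) (M : Set β)) :
    #M ^ 2 ≤ 2 * #{p ∈ M ×ˢ M | p.1 ≤ p.2} := by
  have hswap : #{p ∈ M ×ˢ M | p.2 ≤ p.1} = #{p ∈ M ×ˢ M | p.1 ≤ p.2} :=
    card_nbij' Prod.swap Prod.swap (by intro p; simp +contextual) (by intro p; simp +contextual)
      (fun _ _ => rfl) (fun _ _ => rfl)
  have hnot : #{p ∈ M ×ˢ M | ¬p.1 ≤ p.2} ≤ #{p ∈ M ×ˢ M | p.2 ≤ p.1} := by
    refine card_le_card (monotone_filter_right _ fun p hp hnle => ?_)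
    rw [mem_product] at hp
    exact (hM.total hp.1 hp.2).resolve_left hnle
  calc #M ^ 2 = #{p ∈ M ×ˢ M | p.1 ≤ p.2} + #{p ∈ M ×ˢ M | ¬p.1 ≤ p.2} := by
        rw [card_filter_add_card_filter_not, card_product, sq]
    _ ≤ #{p ∈ M ×ˢ M | p.1 ≤ p.2} + #{p ∈ M ×ˢ M | p.2 ≤ p.1} := by gcongr
    _ = 2 * #{p ∈ M ×ˢ M | p.1 ≤ p.2} := by rw [hswap, two_mul]

theorem Monotone.le_total_of_fin_two {ι : Type*} [LinearOrder ι] {f g : ι → Fin 2}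
    (hf : Monotone f) (hg : Monotone g) : f ≤ g ∨ g ≤ f := by
  by_contra! h
  simp only [Pi.le_def, not_forall, not_le] at h
  obtain ⟨⟨i, hi⟩, ⟨j, hj⟩⟩ := h
  rcases le_total i j with hij | hij
  · have := hf hij; omega
  · have := hg hij; omega

def lineThrough {ι : Type*} (x x' : ι → Fin 2) : ι → Fin 3 :=
  fun i => if x i = x' i then (x i).castSucc else 2

theorem linePoint_lineThrough {n : ℕ} {x x' : Fin n → Fin 2} (h : x ≤ x') :
    linePoint (lineThrough x x') 0 = x ∧ linePoint (lineThrough x x') 1 = x' := by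
  have key : ∀ a b : Fin 2, a ≤ b →
      linePoint (fun _ : Fin 1 => if a = b then a.castSucc else 2) 0 0 = a ∧
        linePoint (fun _ : Fin 1 => if a = b then a.castSucc else 2) 1 0 = b := by decide
  exact ⟨funext fun i => (key _ _ (h i)).1, funext fun i => (key _ _ (h i)).2⟩

theorem monotone_swap_comp_lineThrough {ι : Type*} [Preorder ι] {x x' : ι → Fin 2}
    (hx : Monotone x) (hx' : Monotone x') (h : x ≤ x') :
    Monotone (Equiv.swap (1 : Fin 3) 2 ∘ lineThrough x x') := by
  intro i j hij
  have key : ∀ a b c d : Fin 2, a ≤ c → b ≤ d → a ≤ b → c ≤ d →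
      Equiv.swap (1 : Fin 3) 2 (if a = b then a.castSucc else 2) ≤
        Equiv.swap (1 : Fin 3) 2 (if c = d then c.castSucc else 2) := by decide
  exact key _ _ _ _ (hx hij) (hx' hij) (h i) (h j)

def linesIn {n : ℕ} (A : Finset (Fin n → Fin 2)) : Finset (Fin n → Fin 3) :=
  {y | ∀ j, linePoint y j ∈ A}

theorem sq_card_monotone_le_two_mul_card_linesIn {n : ℕ} (A : Finset (Fin n → Fin 2))
    (π : Equiv.Perm (Fin n)) :
    #{x ∈ A | Monotone (x ∘ π)} ^ 2 ≤
      2 * #{y ∈ linesIn A | Monotone (Equiv.swap (1 : Fin 3) 2 ∘ y ∘ π)} := by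
  classical
  have hchain :
      IsChain (· ≤ ·) (({x ∈ A | Monotone (x ∘ π)} : Finset _) : Set (Fin n → Fin 2)) := by
    intro x hx x' hx' _
    simp only [coe_filter, Set.mem_ofPred_eq] at hx hx'
    have le_of_comp_le {f g : Fin n → Fin 2} (h : f ∘ π ≤ g ∘ π) : f ≤ g := fun i => by
      simpa using h (π.symm i)
    exact (hx.2.le_total_of_fin_two hx'.2).imp le_of_comp_le le_of_comp_le
  refine (sq_card_le_two_mul_card_filter_le hchain).trans (Nat.mul_le_mul_left 2 ?_)
  refine card_le_card_of_injOn (fun p => lineThrough p.1 p.2) ?_ ?_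
  · rintro ⟨x, x'⟩ hp
    simp only [coe_filter, mem_product, mem_filter, Set.mem_ofPred_eq] at hp
    obtain ⟨⟨⟨hxA, hx⟩, ⟨hx'A, hx'⟩⟩, hle⟩ := hp
    obtain ⟨h0, h1⟩ := linePoint_lineThrough hle
    simp only [linesIn, coe_filter, mem_filter, mem_univ, true_and, Fin.forall_fin_two, h0, h1,
      Set.mem_ofPred_eq]
    exact ⟨⟨hxA, hx'A⟩, monotone_swap_comp_lineThrough hx hx' fun i => hle (π i)⟩
  · rintro ⟨x, x'⟩ hp ⟨z, z'⟩ hq heq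
    simp only [coe_filter, mem_product, mem_filter, Set.mem_ofPred_eq] at hp hq heq
    obtain ⟨hx0, hx1⟩ := linePoint_lineThrough hp.2
    obtain ⟨hz0, hz1⟩ := linePoint_lineThrough hq.2
    rw [heq] at hx0 hx1
    exact Prod.ext (hx0.symm.trans hz0) (hx1.symm.trans hz1)

theorem probabilistic_sperner_general (n : ℕ) (δ : ℝ)
    (A : Finset (Fin n → Fin 2)) (hA : esDensity A = δ) :
    δ ^ 2 * ((n : ℝ) + 1) / ((n : ℝ) + 2) ≤
      esDensity ((Finset.univ : Finset (Fin n → Fin 3)).filter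
        fun y => ∀ j : Fin 2, linePoint y j ∈ A) := by
  set a : Equiv.Perm (Fin n) → ℝ := fun π => #{x ∈ A | Monotone (x ∘ π)}
  set b : Equiv.Perm (Fin n) → ℝ :=
    fun π => #{y ∈ linesIn A | Monotone (Equiv.swap (1 : Fin 3) 2 ∘ y ∘ π)}
  have hδ : δ = (∑ π, a π) / (n ! * (n + 1)) := by
    simpa [← hA] using esDensity_eq_sum_card_monotone (Equiv.refl (Fin 2)) A
  have hlines : esDensity (linesIn A) = (∑ π, b π) / (n ! * ((n + 2) * (n + 1) / 2)) := by
    rw [esDensity_eq_sum_card_monotone (Equiv.swap 1 2), cast_choose_two]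
    push_cast
    ring
  have hab : (∑ π, a π) ^ 2 ≤ n ! * (2 * ∑ π, b π) := calc
    (∑ π, a π) ^ 2 ≤ n ! * ∑ π, a π ^ 2 := by
      simpa [Fintype.card_perm] using sq_sum_le_card_mul_sum_sq (s := univ) (f := a)
    _ ≤ n ! * ∑ π, 2 * b π := by
      gcongr with π
      simp only [a, b]
      exact_mod_cast sq_card_monotone_le_two_mul_card_linesIn A π
    _ = n ! * (2 * ∑ π, b π) := by rw [← mul_sum]
  change _ ≤ esDensity (linesIn A)
  rw [hδ, hlines]
  calc ((∑ π, a π) / (n ! * (n + 1))) ^ 2 * (n + 1) / (n + 2)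
      = (∑ π, a π) ^ 2 / (n ! ^ 2 * (n + 1) * (n + 2)) := by field_simp
    _ ≤ n ! * (2 * ∑ π, b π) / (n ! ^ 2 * (n + 1) * (n + 2)) := by gcongr
    _ = (∑ π, b π) / (n ! * ((n + 2) * (n + 1) / 2)) := by field_simp

/-- Probabilistic Sperner theorem: if `A ⊆ [2]^n` has equal-slices density `δ`,
then the set of (possibly degenerate) combinatorial lines contained in `A`,
viewed as a subset of `[3]^n`, has equal-slices density at least `δ²(n+1)/(n+2)`. -/
theorem probabilistic_sperner (n : ℕ) (hn : 0 < n) (δ : ℝ)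
    (A : Finset (Fin n → Fin 2)) (hA : esDensity A = δ) :
    δ ^ 2 * ((n : ℝ) + 1) / ((n : ℝ) + 2) ≤
      esDensity ((Finset.univ : Finset (Fin n → Fin 3)).filter
        fun y => ∀ j : Fin 2, linePoint y j ∈ A) :=
  probabilistic_sperner_general n δ A hA
end

section
/- Let x be a random point of [k]^n chosen according to the equal-slices measure. Then the probability that no coordinate of x is equal to k is exactly (k−1)/(n+k−1); in particular it is at most k/n. -/
open Finset

/-!
The strings with a given count vector `c` form one orbit of the coordinate permutations, and
the stabilizer of a string permutes each of its fibres independently, so it has `∏ j, (c j)!`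
elements. By orbit–stabilizer the slice of `c` has `multinomial c` elements, hence summing
`1 / multinomial` over all of `[m]^n` counts the slices: `m.multichoose n` of them. A string of
`[k]^n` avoiding the top value is a string of `[k-1]^n` with the same multinomial weight, so the
probability is `(k-1).multichoose n / k.multichoose n = (k-1)/(n+k-1)`.
-/

lemma Finset.card_piAntidiag_nat_eq_multichoose {ι : Type*} [DecidableEq ι] (s : Finset ι)
    (n : ℕ) : #(piAntidiag s n) = (#s).multichoose n := by
  rw [← card_finsuppAntidiag_nat_eq_multichoose, finsuppAntidiag, card_map, card_attach]

section Slices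

variable {α β ι : Type*} [Fintype α] [Fintype β] [DecidableEq ι]

def sliceCount (x : α → ι) (j : ι) : ℕ := #{a | x a = j}

lemma sum_sliceCount [Fintype ι] (x : α → ι) : ∑ j, sliceCount x j = Fintype.card α := by
  rw [← card_univ]
  exact (card_eq_sum_card_fiberwise fun a _ => mem_univ (x a)).symm

lemma sliceCount_comp_equiv (x : α → ι) (σ : β ≃ α) : sliceCount (x ∘ σ) = sliceCount x :=
  funext fun j => card_equiv σ (by simp)

lemma sliceCount_eq_iff_exists_equiv {x : α → ι} {y : β → ι} :
    sliceCount y = sliceCount x ↔ ∃ σ : β ≃ α, x ∘ σ = y := by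
  constructor
  · intro h
    have hfiber : ∀ j, Fintype.card {b // y b = j} = Fintype.card {a // x a = j} := fun j => by
      simp only [Fintype.card_subtype]
      exact congrFun h j
    exact ⟨Equiv.ofFiberEquiv fun j => Fintype.equivOfCardEq (hfiber j),
      funext (Equiv.ofFiberEquiv_map _)⟩
  · rintro ⟨σ, rfl⟩
    exact sliceCount_comp_equiv x σ

lemma exists_sliceCount_eq [Fintype ι] (c : ι → ℕ) (hc : ∑ j, c j = Fintype.card α) :
    ∃ x : α → ι, sliceCount x = c := by
  obtain ⟨e⟩ : Nonempty (α ≃ Σ j, Fin (c j)) := Fintype.card_eq.mp (by simp [hc])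
  refine ⟨fun a => (e a).1, funext fun j => ?_⟩
  calc sliceCount (fun a => (e a).1) j = #{s : Σ j, Fin (c j) | s.1 = j} :=
        card_equiv e (by simp)
    _ = c j := by
      rw [card_filter, Fintype.sum_sigma]
      simp [apply_ite card]

lemma orbit_domMulAct_perm_eq_setOf_sliceCount (x : α → ι) :
    MulAction.orbit (Equiv.Perm α)ᵈᵐᵃ x = {y | sliceCount y = sliceCount x} := by
  ext y
  rw [Set.mem_ofPred_eq, sliceCount_eq_iff_exists_equiv, MulAction.mem_orbit_iff]
  exact ⟨fun ⟨g, hg⟩ => ⟨DomMulAct.mk.symm g, hg⟩, fun ⟨σ, hσ⟩ => ⟨DomMulAct.mk σ, hσ⟩⟩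

lemma card_filter_sliceCount_eq_mul_prod_factorial [DecidableEq α] [Fintype ι] (x : α → ι) :
    #{y : α → ι | sliceCount y = sliceCount x} * ∏ j, (sliceCount x j).factorial
      = (Fintype.card α).factorial := by
  have hstab : Nat.card (MulAction.stabilizer (Equiv.Perm α)ᵈᵐᵃ x)
      = ∏ j, (sliceCount x j).factorial := by
    rw [← Nat.card_congr (Equiv.subtypeEquiv (p := fun g : Equiv.Perm α => x ∘ g = x)
        DomMulAct.mk fun _ => Iff.rfl),
      Nat.card_eq_fintype_card, DomMulAct.stabilizer_card]
    simp only [Fintype.card_subtype, sliceCount]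
  have horbit : (MulAction.orbit (Equiv.Perm α)ᵈᵐᵃ x).ncard
      = #{y : α → ι | sliceCount y = sliceCount x} := by
    rw [orbit_domMulAct_perm_eq_setOf_sliceCount, ← Set.ncard_coe_finset]
    simp
  have hgroup : Nat.card (Equiv.Perm α)ᵈᵐᵃ = (Fintype.card α).factorial := by
    rw [← Nat.card_congr DomMulAct.mk, Nat.card_perm, Nat.card_eq_fintype_card]
  rw [← horbit, ← hstab, ← hgroup, ← MulAction.index_stabilizer, mul_comm,
    Subgroup.card_mul_index]

lemma card_filter_sliceCount_eq_multinomial [DecidableEq α] [Fintype ι] (x : α → ι) :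
    #{y : α → ι | sliceCount y = sliceCount x} = Nat.multinomial univ (sliceCount x) := by
  refine Nat.eq_of_mul_eq_mul_left (Nat.prod_factorial_pos univ (sliceCount x)) ?_
  rw [Nat.multinomial_spec, sum_sliceCount, mul_comm,
    card_filter_sliceCount_eq_mul_prod_factorial]

theorem sum_inv_multinomial_sliceCount {R : Type*} [DivisionRing R] [CharZero R]
    [DecidableEq α] [Fintype ι] :
    ∑ x : α → ι, ((Nat.multinomial univ (sliceCount x) : R))⁻¹
      = (Fintype.card ι).multichoose (Fintype.card α) := by
  have hslice : ∀ c ∈ piAntidiag univ (Fintype.card α),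
      ∑ x : α → ι with sliceCount x = c, ((Nat.multinomial univ (sliceCount x) : R))⁻¹ = 1 := by
    intro c hc
    obtain ⟨x, rfl⟩ := exists_sliceCount_eq c (mem_piAntidiag.1 hc).1
    rw [sum_congr rfl fun y hy => by rw [(mem_filter.1 hy).2], sum_const,
      card_filter_sliceCount_eq_multinomial, nsmul_eq_mul,
      mul_inv_cancel₀ (Nat.cast_ne_zero.2 (Nat.multinomial_pos _ _).ne')]
  rw [← sum_fiberwise_of_maps_to (t := piAntidiag univ (Fintype.card α)) (g := sliceCount)
    fun x _ => mem_piAntidiag.2 ⟨sum_sliceCount x, by simp⟩, sum_congr rfl hslice, sum_const,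
    nsmul_one, card_piAntidiag_nat_eq_multichoose, card_univ]

lemma sliceCount_embedding_comp_apply {κ : Type*} [DecidableEq κ] (e : ι ↪ κ) (x : α → ι)
    (j : ι) : sliceCount (e ∘ x) (e j) = sliceCount x j := by
  simp [sliceCount]

lemma multinomial_sliceCount_embedding_comp {κ : Type*} [Fintype ι] [Fintype κ] [DecidableEq κ]
    (e : ι ↪ κ) (x : α → ι) :
    Nat.multinomial univ (sliceCount (e ∘ x)) = Nat.multinomial univ (sliceCount x) := by
  classical
  have hzero : ∀ k ∈ univ \ univ.map e, sliceCount (e ∘ x) k = 0 := by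
    intro k hk
    simp only [mem_sdiff, mem_univ, mem_map, true_and, not_exists] at hk
    simp [sliceCount, hk]
  rw [← Nat.multinomial_congr_of_sdiff (subset_univ _) hzero fun _ _ => rfl]
  simp [Nat.multinomial, sum_map, prod_map, sliceCount_embedding_comp_apply]

end Slices

lemma Nat.multichoose_eq_choose_sub_one {k : ℕ} (hk : 0 < k) (n : ℕ) :
    k.multichoose n = (n + k - 1).choose (k - 1) := by
  rw [Nat.multichoose_eq, Nat.choose_symm_of_eq_add (by omega : n + k - 1 = (k - 1) + n),
    add_comm]

lemma Nat.add_mul_multichoose (K n : ℕ) :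
    (n + K) * K.multichoose n = K * (K + 1).multichoose n := by
  rcases K with _ | L
  · cases n <;> simp [Nat.multichoose_zero_succ]
  · rw [Nat.multichoose_eq, Nat.multichoose_eq, show L + 1 + n - 1 = L + n by omega,
      show L + 1 + 1 + n - 1 = L + n + 1 by omega, mul_comm, ← add_assoc, add_comm n L,
      Nat.choose_mul_succ_eq, show L + n + 1 - n = L + 1 by omega, mul_comm]

lemma slicePr_eq (k n : ℕ) (x : Fin n → Fin k) :
    slicePr k n x
      = (((n + k - 1).choose (k - 1) : ℝ))⁻¹ * ((Nat.multinomial univ (sliceCount x) : ℝ))⁻¹ :=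
  rfl

lemma filter_forall_ne_last_eq_map_castSucc (n K : ℕ) :
    ({x | ∀ i, x i ≠ Fin.last K} : Finset (Fin n → Fin (K + 1)))
      = univ.map Fin.castSuccEmb.arrowCongrRight := by
  ext x
  simp only [mem_filter, mem_univ, true_and, mem_map, Function.Embedding.arrowCongrRight_apply,
    Fin.coe_castSuccEmb, ← Fin.exists_castSucc_eq, funext_iff, Function.comp_apply]
  exact Classical.skolem

/-- For an equal-slices random point of `[k]^n`, the probability that no coordinate
equals `k` (the top value) is exactly `(k-1)/(n+k-1)`, and in particular at most `k/n`. -/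
theorem equal_slices_degenerate_probability (k n : ℕ) (hk : 0 < k) (hn : 0 < n) :
    esDensity ((Finset.univ : Finset (Fin n → Fin k)).filter
        fun x => ∀ i, (x i : ℕ) ≠ k - 1) = ((k : ℝ) - 1) / ((n : ℝ) + k - 1) ∧
    esDensity ((Finset.univ : Finset (Fin n → Fin k)).filter
        fun x => ∀ i, (x i : ℕ) ≠ k - 1) ≤ (k : ℝ) / n := by
  obtain ⟨K, rfl⟩ : ∃ K, k = K + 1 := ⟨k - 1, by omega⟩
  have hfilter : ({x | ∀ i, (x i : ℕ) ≠ K + 1 - 1} : Finset (Fin n → Fin (K + 1)))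
      = univ.map Fin.castSuccEmb.arrowCongrRight := by
    simpa [Fin.ext_iff] using filter_forall_ne_last_eq_map_castSucc n K
  have hdensity : esDensity ({x | ∀ i, (x i : ℕ) ≠ K + 1 - 1} : Finset (Fin n → Fin (K + 1)))
      = K / (n + K) := by
    simp only [esDensity, slicePr_eq, ← mul_sum, hfilter, sum_map,
      Function.Embedding.arrowCongrRight_apply, multinomial_sliceCount_embedding_comp,
      sum_inv_multinomial_sliceCount, Fintype.card_fin, ← Nat.multichoose_eq_choose_sub_one hk]
    have hpos : 0 < (K + 1).multichoose n := by
      rw [Nat.multichoose_eq]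
      exact Nat.choose_pos (by omega)
    rw [inv_mul_eq_div, div_eq_div_iff (by positivity) (by positivity)]
    exact_mod_cast (mul_comm _ _).trans (Nat.add_mul_multichoose K n)
  refine ⟨by rw [hdensity]; push_cast; ring_nf, ?_⟩
  rw [hdensity, div_le_div_iff₀ (by positivity) (by exact_mod_cast hn)]
  push_cast
  nlinarith
end

section
/- Let ν be the equal-slices measure on [k]^n and let ν̃ be the non-degenerate equal-slices measure on [k]^n. Then for every set A ⊆ [k]^n we have |ν(A) − ν̃(A)| ≤ k²/n. -/
open Finset

/-- The non-degenerate equal-slices probability of a single string `x ∈ [k]^n`: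
the tuple of counts is chosen uniformly among `k`-tuples of *positive* integers
summing to `n` (there are `(n-1).choose (k-1)` of them); strings missing some
value have probability `0`. -/
noncomputable def ndSlicePr (k n : ℕ) (x : Fin n → Fin k) : ℝ :=
  if ∀ j : Fin k, ∃ i, x i = j then
    (((n - 1).choose (k - 1) : ℝ))⁻¹ *
      ((Nat.multinomial Finset.univ
        (fun j : Fin k => (Finset.univ.filter fun i => x i = j).card) : ℝ))⁻¹
  else 0

/-- The non-degenerate equal-slices measure of a set `A ⊆ [k]^n`. -/
noncomputable def ndEsDensity {k n : ℕ} (A : Finset (Fin n → Fin k)) : ℝ :=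
  ∑ x ∈ A, ndSlicePr k n x

/-!
Since `ndSlicePr` is `slicePr` conditioned on the set `E` of strings taking every value, the two
measures of any set differ by at most `ν Eᶜ`. Both weight a string by the inverse size of its
slice, a multinomial coefficient, so `ν E` is the proportion of compositions of `n` into `k`
parts that are positive: `C(n-1, k-1) / C(n+k-1, k-1)`. Finally Pascal's rule telescopes to
`C(n+k-1, k-1) - C(n-1, k-1) = ∑_{j<k} C(n-1+j, k-2) ≤ k (k-1)/(n+k-1) · C(n+k-1, k-1)`.
-/

section Slices

variable {ι κ : Type*} [Fintype ι] [DecidableEq κ]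

def fiberCard (x : ι → κ) (j : κ) : ℕ := #{i | x i = j}

lemma fiberCard_pos_iff {x : ι → κ} {j : κ} : 0 < fiberCard x j ↔ ∃ i, x i = j := by
  simp [fiberCard, card_pos, filter_nonempty_iff]

lemma sum_fiberCard [Fintype κ] (x : ι → κ) : ∑ j, fiberCard x j = Fintype.card ι := by
  simp only [fiberCard, sum_card_fiberwise_eq_card_filter, mem_univ, filter_true, card_univ]

variable [DecidableEq ι] [Fintype κ]

open MvPolynomial in
/-- Compare coefficients of `∏ j, X j ^ c j` in `(∑ j, X j) ^ card ι = ∑ x, ∏ i, X (x i)`. -/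
theorem card_fiberCard_eq_multinomial (c : κ → ℕ) (hc : ∑ j, c j = Fintype.card ι) :
    #{x : ι → κ | fiberCard x = c} = Nat.multinomial univ c := by
  set d : κ →₀ ℕ := Finsupp.equivFunOnFinite.symm c
  have hmon : ∀ x : ι → κ, ∏ i, (X (x i) : MvPolynomial κ ℕ) = ∏ j, X j ^ fiberCard x j :=
    fun x => by simp only [← prod_fiberwise' univ x, prod_const, fiberCard]
  have h := coeff_sum_X_pow_of_fintype (R := ℕ) d (Fintype.card ι)
  rw [← card_univ, ← prod_const, Fintype.prod_sum, coeff_sum] at h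
  simp only [hmon, coeff_prod_X_pow] at h
  have hd : (d.sum fun _ m => m) = #(univ : Finset ι) := by
    rw [Finsupp.sum_fintype _ _ (fun _ => rfl), card_univ, ← hc]; rfl
  rw [hd, if_pos rfl, Finsupp.multinomial_eq_of_support_subset (subset_univ _), Nat.cast_id] at h
  rw [card_filter]
  convert h using 2 with x <;> simp [d, Finsupp.ext_iff, eq_comm, funext_iff]

theorem sum_inv_multinomial_fiberCard (Q : (κ → ℕ) → Prop) [DecidablePred Q] :
    ∑ x : ι → κ with Q (fiberCard x), ((Nat.multinomial univ (fiberCard x) : ℝ))⁻¹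
      = #{c ∈ piAntidiag univ (Fintype.card ι) | Q c} := by
  rw [← sum_fiberwise_of_maps_to' (t := {c ∈ piAntidiag univ (Fintype.card ι) | Q c})
    (g := fiberCard) (fun x hx => by simpa [sum_fiberCard] using hx)
    (fun c => ((Nat.multinomial univ c : ℝ))⁻¹), card_eq_sum_ones, Nat.cast_sum]
  refine sum_congr rfl fun c hc => ?_
  obtain ⟨hc, hQ⟩ := mem_filter.mp hc
  rw [sum_const, filter_filter,
    filter_congr fun x _ => and_iff_right_of_imp fun (h : fiberCard x = c) => h ▸ hQ,
    card_fiberCard_eq_multinomial c (by simpa using hc), nsmul_eq_mul,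
    Nat.cast_one, mul_inv_cancel₀ (by exact_mod_cast (Nat.multinomial_pos _ _).ne')]

end Slices

section Compositions

variable {ι : Type*} [Fintype ι] [DecidableEq ι]

theorem card_piAntidiag_univ (n : ℕ) :
    #(piAntidiag (univ : Finset ι) n) = (Fintype.card ι + n - 1).choose n := by
  rw [← map_sym_eq_piAntidiag, card_map, sym_univ, card_univ, Sym.card_sym_eq_choose]

theorem card_filter_pos_piAntidiag_add_card (m : ℕ) :
    #{c ∈ piAntidiag (univ : Finset ι) (m + Fintype.card ι) | ∀ j, 0 < c j}
      = #(piAntidiag (univ : Finset ι) m) := by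
  refine card_nbij' (· - 1) (· + 1) (fun c hc => ?_) (fun d hd => ?_) (fun c hc => ?_)
    (fun d _ => ?_) <;>
    simp only [coe_filter, mem_piAntidiag, mem_univ, Set.mem_ofPred_eq, mem_coe, implies_true,
      and_true, Pi.sub_apply, Pi.add_apply, Pi.one_apply] at *
  · rw [sum_tsub_distrib _ fun j _ => hc.2 j, hc.1, sum_const, card_univ, smul_eq_mul, mul_one,
      Nat.add_sub_cancel]
  · simp [sum_add_distrib, hd]
  · exact funext fun j => Nat.sub_add_cancel (hc.2 j)
  · exact funext fun j => Nat.add_sub_cancel _ _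

theorem card_filter_pos_piAntidiag_univ {n : ℕ} (hι : 0 < Fintype.card ι) (hn : 0 < n) :
    #{c ∈ piAntidiag (univ : Finset ι) n | ∀ j, 0 < c j}
      = (n - 1).choose (Fintype.card ι - 1) := by
  obtain hlt | ⟨m, rfl⟩ : n < Fintype.card ι ∨ ∃ m, n = m + Fintype.card ι :=
    (lt_or_ge n _).imp_right fun h => ⟨n - Fintype.card ι, by omega⟩
  · rw [Nat.choose_eq_zero_of_lt (by omega), card_eq_zero, filter_eq_empty_iff]
    intro c hc hpos
    have : ∑ _j : ι, 1 ≤ ∑ j, c j := sum_le_sum fun j _ => hpos j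
    simp [(mem_piAntidiag.mp hc).1] at this
    omega
  · rw [card_filter_pos_piAntidiag_add_card, card_piAntidiag_univ,
      show Fintype.card ι + m - 1 = m + Fintype.card ι - 1 by omega,
      Nat.choose_symm_of_eq_add (show _ = m + (Fintype.card ι - 1) by omega)]

end Compositions

theorem Nat.choose_add_eq_choose_add_sum_range (m r a : ℕ) :
    (m + a).choose (r + 1) = m.choose (r + 1) + ∑ j ∈ range a, (m + j).choose r := by
  induction a with
  | zero => simp
  | succ a ih => rw [sum_range_succ, ← add_assoc, Nat.choose_succ_succ', ih]; ring

theorem Nat.add_mul_choose_sub_choose_le (m k : ℕ) :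
    (m + k) * ((m + k).choose (k - 1) - m.choose (k - 1))
      ≤ k * (k - 1) * (m + k).choose (k - 1) := by
  obtain _ | _ | s := k
  · simp
  · simp
  have hsum : ∑ j ∈ range (s + 2), (m + j).choose s ≤ (s + 2) * (m + s + 1).choose s := by
    simpa using sum_le_sum fun j (hj : j ∈ range (s + 2)) =>
      Nat.choose_le_choose s (show m + j ≤ m + s + 1 by simp at hj; omega)
  have hpascal : (m + (s + 2)) * (m + s + 1).choose s = (m + (s + 2)).choose (s + 1) * (s + 1) :=
    Nat.add_one_mul_choose_eq (m + s + 1) s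
  have htel := Nat.choose_add_eq_choose_add_sum_range m s (s + 2)
  rw [Nat.add_sub_cancel, htel, Nat.add_sub_cancel_left]
  calc (m + (s + 2)) * ∑ j ∈ range (s + 2), (m + j).choose s
      ≤ (m + (s + 2)) * ((s + 2) * (m + s + 1).choose s) := Nat.mul_le_mul_left _ hsum
    _ = (s + 2) * (s + 1) * (m.choose (s + 1) + ∑ j ∈ range (s + 2), (m + j).choose s) := by
      rw [← htel, mul_left_comm, hpascal]; ring

theorem one_sub_choose_div_choose_le {k n : ℕ} (hk : 0 < k) (hn : 0 < n) :
    1 - ((n - 1).choose (k - 1) : ℝ) / (n + k - 1).choose (k - 1) ≤ (k : ℝ) ^ 2 / n := by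
  obtain ⟨m, rfl⟩ : ∃ m, n = m + 1 := ⟨n - 1, by omega⟩
  have hC : (0 : ℝ) < (m + k).choose (k - 1) := by exact_mod_cast Nat.choose_pos (by omega)
  have hle : m.choose (k - 1) ≤ (m + k).choose (k - 1) := Nat.choose_le_choose _ (by omega)
  have key : (m + 1) * ((m + k).choose (k - 1) - m.choose (k - 1))
      ≤ k ^ 2 * (m + k).choose (k - 1) :=
    calc _ ≤ (m + k) * ((m + k).choose (k - 1) - m.choose (k - 1)) :=
          Nat.mul_le_mul_right _ (by omega)
      _ ≤ k * (k - 1) * (m + k).choose (k - 1) := Nat.add_mul_choose_sub_choose_le m k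
      _ ≤ k ^ 2 * (m + k).choose (k - 1) :=
          Nat.mul_le_mul_right _ (by rw [sq]; exact Nat.mul_le_mul_left _ (by omega))
  rw [show m + 1 + k - 1 = m + k by omega, Nat.add_sub_cancel, one_sub_div hC.ne',
    div_le_div_iff₀ hC (by positivity)]
  exact_mod_cast (by simpa [Nat.cast_sub hle, mul_comm] using key)

/-- The second sum is the mass of `A` under `p` conditioned on `P`; when `p {P} = 0` that
conditioned measure is `0` (as `x / 0 = 0`) and the bound still holds. -/
theorem abs_sum_sub_sum_cond_le {α : Type*} [Fintype α] {p : α → ℝ} (hp : ∀ x, 0 ≤ p x)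
    (hp1 : ∑ x, p x = 1) (P : α → Prop) [DecidablePred P] (A : Finset α) :
    |∑ x ∈ A, p x - ∑ x ∈ A, if P x then p x / ∑ y with P y, p y else 0|
      ≤ 1 - ∑ y with P y, p y := by
  set e := ∑ y with P y, p y
  set a := ∑ x ∈ A with ¬P x, p x
  set b := ∑ x ∈ A with P x, p x
  have hsplit : ∑ x ∈ A, p x = b + a := (sum_filter_add_sum_filter_not _ _ _).symm
  have hcond : ∑ x ∈ A, (if P x then p x / e else 0) = b / e := by rw [← sum_filter, sum_div]
  have ha : a ≤ 1 - e := by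
    rw [← hp1, ← sum_filter_add_sum_filter_not univ P p, add_sub_cancel_left]
    exact sum_le_sum_of_subset_of_nonneg (filter_subset_filter _ (subset_univ A))
      fun x _ _ => hp x
  have hb : b ≤ e :=
    sum_le_sum_of_subset_of_nonneg (filter_subset_filter _ (subset_univ A)) fun x _ _ => hp x
  have ha0 : 0 ≤ a := sum_nonneg fun x _ => hp x
  have hb0 : 0 ≤ b := sum_nonneg fun x _ => hp x
  rw [hsplit, hcond]
  rcases (hb0.trans hb).eq_or_lt with he | he
  · rw [← he, div_zero, le_antisymm (he ▸ hb) hb0, zero_add, sub_zero, sub_zero,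
      abs_of_nonneg ha0]
    linarith
  · have hlow : b ≤ b / e := (le_div_iff₀ he).mpr (by nlinarith)
    have hup : b / e - b ≤ 1 - e := by
      rw [div_sub' he.ne', div_le_iff₀ he]; nlinarith
    rw [abs_le]; constructor <;> linarith

lemma slicePr_nonneg (k n : ℕ) (x : Fin n → Fin k) : 0 ≤ slicePr k n x := by
  unfold slicePr; positivity

theorem sum_slicePr_eq_card_div (k n : ℕ) (Q : (Fin k → ℕ) → Prop) [DecidablePred Q] :
    ∑ x : Fin n → Fin k with Q (fiberCard x), slicePr k n x
      = #{c ∈ piAntidiag univ n | Q c} / (n + k - 1).choose (k - 1) := by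
  have h := sum_inv_multinomial_fiberCard (ι := Fin n) Q
  rw [Fintype.card_fin] at h
  rw [div_eq_inv_mul, ← h, mul_sum]
  rfl

theorem sum_slicePr {k : ℕ} (hk : 0 < k) (n : ℕ) : ∑ x : Fin n → Fin k, slicePr k n x = 1 := by
  have h := sum_slicePr_eq_card_div k n (fun _ => True)
  simp only [filter_true, card_piAntidiag_univ, Fintype.card_fin] at h
  rw [h, show k + n - 1 = n + k - 1 by omega,
    Nat.choose_symm_of_eq_add (show n + k - 1 = n + (k - 1) by omega), div_self]
  exact_mod_cast (Nat.choose_pos (by omega)).ne'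

theorem sum_slicePr_surjective {k n : ℕ} (hk : 0 < k) (hn : 0 < n) :
    ∑ x : Fin n → Fin k with ∀ j, ∃ i, x i = j, slicePr k n x
      = ((n - 1).choose (k - 1) : ℝ) / (n + k - 1).choose (k - 1) := by
  have hsurj : univ.filter (fun x : Fin n → Fin k => ∀ j, ∃ i, x i = j)
      = univ.filter fun x => ∀ j, 0 < fiberCard x j := by simp only [fiberCard_pos_iff]
  have hpos := card_filter_pos_piAntidiag_univ (ι := Fin k) (by simpa) hn
  rw [Fintype.card_fin] at hpos
  rw [hsurj, sum_slicePr_eq_card_div k n (fun c => ∀ j, 0 < c j), ← hpos]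
  -- the two filters differ only in their `Decidable` instances
  congr!

lemma ndSlicePr_eq_ite_div (k n : ℕ) (x : Fin n → Fin k) :
    ndSlicePr k n x = if ∀ j, ∃ i, x i = j then
      slicePr k n x / (((n - 1).choose (k - 1) : ℝ) / (n + k - 1).choose (k - 1)) else 0 := by
  have hC : ((n + k - 1).choose (k - 1) : ℝ) ≠ 0 := by
    exact_mod_cast (Nat.choose_pos (by omega)).ne'
  unfold ndSlicePr slicePr
  split_ifs
  · field_simp
  · rfl

/-- The equal-slices and non-degenerate equal-slices measures of any set differ
by at most `k²/n`. -/
theorem equal_slices_vs_nondegenerate (k n : ℕ) (hk : 0 < k) (hn : 0 < n)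
    (A : Finset (Fin n → Fin k)) :
    |esDensity A - ndEsDensity A| ≤ (k : ℝ) ^ 2 / n := by
  have hE := sum_slicePr_surjective hk hn
  calc |esDensity A - ndEsDensity A|
      = |∑ x ∈ A, slicePr k n x - ∑ x ∈ A, if ∀ j, ∃ i, x i = j then
          slicePr k n x / ∑ y with ∀ j, ∃ i, y i = j, slicePr k n y else 0| := by
        simp only [esDensity, ndEsDensity, ndSlicePr_eq_ite_div, hE]
    _ ≤ 1 - ∑ y with ∀ j, ∃ i, y i = j, slicePr k n y :=
        abs_sum_sub_sum_cond_le (slicePr_nonneg k n) (sum_slicePr hk n) _ A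
    _ ≤ (k : ℝ) ^ 2 / n := hE ▸ one_sub_choose_div_choose_le hk hn
end

section
/- For every δ > 0 there exists a positive integer N such that every subset A ⊆ [N]² with |A| ≥ δN² contains a corner, i.e. a triple of the form {(x, y), (x+d, y), (x, y+d)} with d > 0. -/
/-!
Mathlib's corners theorem gives, in any dense subset of a grid, a corner
`(x, y), (x + d, y), (x, y + d)` with `d ≠ 0`, but possibly `d < 0`. To force `d > 0`, pass to
the symmetric part `A ∩ (c - A)` for a popular sum `c`: the `|A|²` pairs of `A` have at most
`(2N)²` sums, so some `c` has `|A ∩ (c - A)| ≥ |A|² / (2N)² ≥ δ²N² / 4`, and in this symmetric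
set a corner with `d < 0` reflects through `c` to one with `d > 0`.
-/

open Finset
open scoped Pointwise

namespace Finset

variable {G : Type*} [AddCommMonoid G] [DecidableEq G]

-- `A ∩ (c - A)`, written without subtraction so that it makes sense in `ℕ × ℕ`.
def symmPart (A : Finset G) (c : G) : Finset G := {p ∈ A | ∃ q ∈ A, p + q = c}

lemma symmPart_subset (A : Finset G) (c : G) : A.symmPart c ⊆ A := filter_subset _ _

lemma exists_add_eq_of_mem_symmPart {A : Finset G} {c p : G} (hp : p ∈ A.symmPart c) :
    ∃ q ∈ A.symmPart c, p + q = c := by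
  obtain ⟨hpA, q, hqA, hpq⟩ := mem_filter.1 hp
  exact ⟨q, mem_filter.2 ⟨hqA, p, hpA, by rwa [add_comm]⟩, hpq⟩

lemma exists_sq_card_le_card_add_mul_card_symmPart [IsLeftCancelAdd G] (A : Finset G) :
    ∃ c, #A ^ 2 ≤ #(A + A) * #(A.symmPart c) := by
  obtain rfl | hA := A.eq_empty_or_nonempty
  · exact ⟨0, by simp⟩
  obtain ⟨c, -, hc⟩ := exists_le_card_fiber_of_nsmul_le_card_of_maps_to
    (s := A ×ˢ A) (t := A + A) (f := fun x ↦ x.1 + x.2)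
    (b := (#A ^ 2 : ℚ) / #(A + A))
    (fun x hx ↦ add_mem_add (mem_product.1 hx).1 (mem_product.1 hx).2) (hA.add hA)
    (by rw [nsmul_eq_mul, mul_div_cancel₀ _ (by exact_mod_cast (hA.add hA).card_pos.ne'),
      card_product, sq, Nat.cast_mul])
  have hfiber : #{x ∈ A ×ˢ A | x.1 + x.2 = c} ≤ #(A.symmPart c) := by
    refine card_le_card_of_injOn Prod.fst (fun x hx ↦ ?_) (fun x hx y hy hxy ↦ ?_)
    · simp only [coe_filter, mem_product, Set.mem_ofPred_eq] at hx
      exact mem_filter.2 ⟨hx.1.1, x.2, hx.1.2, hx.2⟩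
    · simp only [coe_filter, mem_product, Set.mem_ofPred_eq] at hx hy
      refine Prod.ext hxy (add_left_cancel (a := x.1) ?_)
      rw [hx.2, hxy, hy.2]
  refine ⟨c, ?_⟩
  rw [div_le_iff₀ (by exact_mod_cast (hA.add hA).card_pos)] at hc
  have : (#A ^ 2 : ℚ) ≤ #(A + A) * #(A.symmPart c) :=
    hc.trans (by rw [mul_comm]; gcongr)
  exact_mod_cast this

end Finset

lemma exists_corner_of_not_isCornerFree {B : Finset (ℕ × ℕ)} {c : ℕ × ℕ}
    (hB : ∀ p ∈ B, ∃ q ∈ B, p + q = c) (h : ¬ IsCornerFree (B : Set (ℕ × ℕ))) :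
    ∃ x y d : ℕ, 0 < d ∧ (x, y) ∈ B ∧ (x + d, y) ∈ B ∧ (x, y + d) ∈ B := by
  simp only [IsCornerFree, isCorner_iff, mem_coe, not_forall] at h
  obtain ⟨x₁, y₁, x₂, y₂, ⟨h₁₁, h₁₂, h₂₁, hxy⟩, hne⟩ := h
  rcases Nat.lt_or_gt_of_ne hne with hlt | hgt
  · refine ⟨x₁, y₁, x₂ - x₁, by omega, h₁₁, ?_, ?_⟩
    · rwa [Nat.add_sub_cancel' hlt.le]
    · rwa [show y₁ + (x₂ - x₁) = y₂ by omega]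
  obtain ⟨⟨a₁₁, b₁₁⟩, k₁₁, e₁₁⟩ := hB _ h₁₁
  obtain ⟨⟨a₁₂, b₁₂⟩, k₁₂, e₁₂⟩ := hB _ h₁₂
  obtain ⟨⟨a₂₁, b₂₁⟩, k₂₁, e₂₁⟩ := hB _ h₂₁
  simp only [Prod.ext_iff, Prod.fst_add, Prod.snd_add] at e₁₁ e₁₂ e₂₁
  refine ⟨a₁₁, b₁₁, x₁ - x₂, by omega, k₁₁, ?_, ?_⟩
  · rwa [show (a₁₁ + (x₁ - x₂), b₁₁) = (a₂₁, b₂₁) by ext <;> dsimp only <;> omega]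
  · rwa [show (a₁₁, b₁₁ + (x₁ - x₂)) = (a₁₂, b₁₂) by ext <;> dsimp only <;> omega]

lemma card_add_le_of_subset_Icc_prod {A : Finset (ℕ × ℕ)} {N : ℕ}
    (hA : A ⊆ Icc 1 N ×ˢ Icc 1 N) : #(A + A) ≤ (2 * N) ^ 2 := by
  rw [Icc_product_Icc] at hA
  calc #(A + A) ≤ #(Icc ((1, 1) + (1, 1)) ((N, N) + (N, N))) :=
        card_le_card ((add_subset_add hA hA).trans (Icc_add_Icc_subset _ _ _ _))
    _ ≤ (2 * N) ^ 2 := by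
        rw [card_Icc_prod]
        simp only [Prod.mk_add_mk, Nat.card_Icc]
        rw [sq]; gcongr <;> omega

lemma exists_le_card_symmPart {δ : ℝ} {N : ℕ} {A : Finset (ℕ × ℕ)} (hδ : 0 < δ) (hN : 1 ≤ N)
    (hA : A ⊆ Icc 1 N ×ˢ Icc 1 N) (hAδ : δ * N ^ 2 ≤ #A) :
    ∃ c, δ ^ 2 / 16 * ((N + 1 : ℕ) : ℝ) ^ 2 ≤ #(A.symmPart c) := by
  obtain ⟨c, hc⟩ := exists_sq_card_le_card_add_mul_card_symmPart A
  refine ⟨c, ?_⟩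
  set b : ℝ := (#(A.symmPart c) : ℝ) with hb
  have hAA : (#(A + A) : ℝ) ≤ 4 * N ^ 2 := by
    have := card_add_le_of_subset_Icc_prod hA
    rw [mul_pow] at this
    exact_mod_cast this
  have hsq : (δ * N ^ 2) ^ 2 ≤ 4 * N ^ 2 * b := calc
    (δ * N ^ 2) ^ 2 ≤ (#A : ℝ) ^ 2 := by gcongr
    _ ≤ #(A + A) * b := by rw [hb]; exact_mod_cast hc
    _ ≤ 4 * N ^ 2 * b := by gcongr
  have hδN : δ ^ 2 * N ^ 2 ≤ 4 * b :=
    le_of_mul_le_mul_left (by nlinarith [hsq]) (by positivity : (0 : ℝ) < N ^ 2)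
  calc δ ^ 2 / 16 * ((N + 1 : ℕ) : ℝ) ^ 2 ≤ δ ^ 2 / 16 * (2 * N) ^ 2 := by
        push_cast; gcongr; exact_mod_cast (by omega : N + 1 ≤ 2 * N)
    _ ≤ b := by nlinarith

/-- The corners theorem of Ajtai and Szemerédi: for every `δ > 0` there exists `N`
such that every `A ⊆ [N]²` with `|A| ≥ δN²` contains a corner
`{(x,y), (x+d,y), (x,y+d)}` with `d > 0`. -/
theorem ajtai_szemeredi_corners (δ : ℝ) (hδ : 0 < δ) :
    ∃ N : ℕ, 0 < N ∧ ∀ A : Finset (ℕ × ℕ),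
      (A ⊆ Finset.Icc 1 N ×ˢ Finset.Icc 1 N) →
      δ * (N : ℝ) ^ 2 ≤ (A.card : ℝ) →
      ∃ x y d : ℕ, 0 < d ∧ (x, y) ∈ A ∧ (x + d, y) ∈ A ∧ (x, y + d) ∈ A := by
  set N := max (cornersTheoremBound (δ ^ 2 / 16 / 9)) 1
  have hN : 1 ≤ N := le_max_right _ _
  refine ⟨N, hN, fun A hA hAδ ↦ ?_⟩
  obtain ⟨c, hc⟩ := exists_le_card_symmPart hδ hN hA hAδ
  have hrange : A.symmPart c ⊆ range (N + 1) ×ˢ range (N + 1) := fun p hp ↦ by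
    have := hA (symmPart_subset A c hp)
    simp only [mem_product, mem_Icc, mem_range] at this ⊢
    omega
  have hcorner := corners_theorem_nat (by positivity) (by omega) _ hrange hc
  obtain ⟨x, y, d, hd, h₀, h₁, h₂⟩ :=
    exists_corner_of_not_isCornerFree (fun _ ↦ exists_add_eq_of_mem_symmPart) hcorner
  exact ⟨x, y, d, hd, symmPart_subset A c h₀, symmPart_subset A c h₁, symmPart_subset A c h₂⟩
end

section
/- Let η > 0, let k ≥ 2, and let m and n be positive integers with m ≤ n^{1/4} and n ≥ (12/η)^{12}. Choose uniformly at random a subset J ⊆ [n] of size m, a uniformly random y ∈ [k]^{[n]∖J}, and a uniformly random x ∈ [k−1]^J. Then the total variation distance between the distribution of the combined string (x, y) ∈ [k]^n and the uniform distribution on [k]^n is at most η. -/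
/-!
For a fixed `m`-set `J`, the string `(x, y)` is uniform on the strings with letters in `[k-1]` on
`J`, a product law `ρ_J`; so `(x, y)` has density `p = 𝔼_J ρ_J`. By Cauchy–Schwarz the squared
distance to uniform is at most the χ²-divergence `kⁿ ∑ p² - 1`, and coordinatewise
`kⁿ ∑_z ρ_J ρ_J' = (1 + r)^|J ∩ J'|` with `r = 1/(k-1)`. Expanding
`(1 + r)^|J ∩ J'| = ∑_{S ⊆ J ∩ J'} r^|S|` and using `P(S ⊆ J) ≤ (m/n)^|S|` gives
`kⁿ ∑ p² ≤ (1 + r (m/n)²)ⁿ ≤ exp (m²/n)`, and `m²/n ≤ n^{-1/2}` is small.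
-/

open Finset Fintype

namespace RandomRestriction

variable {α β ι K' K : Type*}

def inlRange [Fintype α] (e : α ⊕ β ≃ ι) : Finset ι :=
  univ.map (Function.Embedding.inl.trans e.toEmbedding)

lemma mem_inlRange [Fintype α] {e : α ⊕ β ≃ ι} {i : ι} :
    i ∈ inlRange e ↔ ∃ a, e (.inl a) = i := by
  simp [inlRange]

lemma card_inlRange [Fintype α] (e : α ⊕ β ≃ ι) : #(inlRange e) = card α := by
  simp [inlRange]

section Counting

variable [Fintype α] [Fintype β] [Fintype ι] [DecidableEq α] [DecidableEq β] [DecidableEq ι]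

lemma card_mul_card_insert_subset_inlRange_le {s : ι} {S : Finset ι} (hs : s ∉ S) :
    card ι * #{e : α ⊕ β ≃ ι | insert s S ⊆ inlRange e}
      ≤ card α * #{e : α ⊕ β ≃ ι | S ⊆ inlRange e} := by
  -- `(t, e) ↦ (e⁻¹ s, swap s t ∘ e)` is injective: the new equivalence sends `e⁻¹ s` to `t`.
  let f : ι × (α ⊕ β ≃ ι) → (α ⊕ β) × (α ⊕ β ≃ ι) :=
    fun p => (p.2.symm s, p.2.trans (Equiv.swap s p.1))
  calc card ι * #{e : α ⊕ β ≃ ι | insert s S ⊆ inlRange e}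
      = #((univ : Finset ι) ×ˢ ({e : α ⊕ β ≃ ι | insert s S ⊆ inlRange e} : Finset _)) := by
        rw [card_product, card_univ]
    _ ≤ #((univ : Finset α).map .inl ×ˢ ({e : α ⊕ β ≃ ι | S ⊆ inlRange e} : Finset _)) := by
        refine card_le_card_of_injOn f ?_ ?_
        · rintro ⟨t, e⟩ h
          simp only [coe_product, Set.mem_prod, mem_coe, mem_univ, mem_filter, true_and,
            insert_subset_iff, mem_inlRange] at h
          obtain ⟨⟨a, rfl⟩, hS⟩ := h
          simp only [f, coe_product, Set.mem_prod, mem_coe, mem_map, mem_univ, mem_filter,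
            true_and, Equiv.symm_apply_apply]
          refine ⟨⟨a, rfl⟩, fun u hu => mem_inlRange.2 ?_⟩
          by_cases hut : u = t
          · exact ⟨a, by simp [hut]⟩
          · obtain ⟨b, rfl⟩ := mem_inlRange.1 (hS hu)
            have hus : e (.inl b) ≠ e (.inl a) := fun h => hs (h ▸ hu)
            exact ⟨b, by simp [Equiv.swap_apply_of_ne_of_ne hus hut]⟩
        · rintro ⟨t₁, e₁⟩ - ⟨t₂, e₂⟩ - h
          simp only [f, Prod.mk.injEq] at h
          obtain ⟨hs, he⟩ := h
          obtain rfl : t₁ = t₂ :=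
            calc t₁ = e₁.trans (Equiv.swap s t₁) (e₁.symm s) := by simp
              _ = t₂ := by rw [he, hs]; simp
          exact Prod.ext rfl (Equiv.ext fun x => by simpa using congrArg (· x) he)
    _ = card α * #{e : α ⊕ β ≃ ι | S ⊆ inlRange e} := by
        rw [card_product, card_map, card_univ]

lemma card_pow_mul_card_subset_inlRange_le (S : Finset ι) :
    card ι ^ #S * #{e : α ⊕ β ≃ ι | S ⊆ inlRange e} ≤ card α ^ #S * card (α ⊕ β ≃ ι) := by
  induction S using Finset.induction_on with
  | empty => simp
  | insert s S hs ih =>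
    calc card ι ^ #(insert s S) * #{e : α ⊕ β ≃ ι | insert s S ⊆ inlRange e}
        = card ι ^ #S * (card ι * #{e : α ⊕ β ≃ ι | insert s S ⊆ inlRange e}) := by
          rw [card_insert_of_notMem hs, pow_succ, mul_assoc]
      _ ≤ card ι ^ #S * (card α * #{e : α ⊕ β ≃ ι | S ⊆ inlRange e}) :=
          Nat.mul_le_mul_left _ (card_mul_card_insert_subset_inlRange_le hs)
      _ = card α * (card ι ^ #S * #{e : α ⊕ β ≃ ι | S ⊆ inlRange e}) := by ring
      _ ≤ card α * (card α ^ #S * card (α ⊕ β ≃ ι)) := Nat.mul_le_mul_left _ ih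
      _ = card α ^ #(insert s S) * card (α ⊕ β ≃ ι) := by
          rw [card_insert_of_notMem hs, pow_succ]; ring

lemma card_subset_inlRange_le (S : Finset ι) :
    (#{e : α ⊕ β ≃ ι | S ⊆ inlRange e} : ℝ)
      ≤ ((card α : ℝ) / card ι) ^ #S * card (α ⊕ β ≃ ι) := by
  rcases S.eq_empty_or_nonempty with rfl | ⟨i, -⟩
  · simp
  have : 0 < (card ι : ℝ) := Nat.cast_pos.2 (card_pos_iff.2 ⟨i⟩)
  rw [div_pow, div_mul_eq_mul_div, le_div_iff₀ (by positivity), mul_comm]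
  exact_mod_cast card_pow_mul_card_subset_inlRange_le S

lemma one_add_pow_card_eq_sum_subset (r : ℝ) (T : Finset ι) :
    (1 + r) ^ #T = ∑ S : Finset ι, if S ⊆ T then r ^ #S else 0 := by
  rw [← sum_filter, add_comm, ← sum_pow_mul_eq_add_pow r 1 T]
  simp only [one_pow, mul_one]
  congr 1
  ext S
  simp

lemma sum_sum_pow_card_inter_inlRange_le {r : ℝ} (hr : 0 ≤ r) :
    ∑ e : α ⊕ β ≃ ι, ∑ e' : α ⊕ β ≃ ι, (1 + r) ^ #(inlRange e ∩ inlRange e')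
      ≤ (card (α ⊕ β ≃ ι) : ℝ) ^ 2 * (1 + r * ((card α : ℝ) / card ι) ^ 2) ^ card ι := by
  calc ∑ e : α ⊕ β ≃ ι, ∑ e' : α ⊕ β ≃ ι, (1 + r) ^ #(inlRange e ∩ inlRange e')
      = ∑ S : Finset ι, r ^ #S * (#{e : α ⊕ β ≃ ι | S ⊆ inlRange e} : ℝ) ^ 2 := by
        have hsq (S : Finset ι) : r ^ #S * (#{e : α ⊕ β ≃ ι | S ⊆ inlRange e} : ℝ) ^ 2
            = ∑ e : α ⊕ β ≃ ι, ∑ e' : α ⊕ β ≃ ι,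
                if S ⊆ inlRange e then if S ⊆ inlRange e' then r ^ #S else 0 else 0 := by
          rw [natCast_card_filter, sq, Finset.sum_mul_sum, mul_sum]
          refine sum_congr rfl fun e _ => ?_
          rw [mul_sum]
          refine sum_congr rfl fun e' _ => ?_
          split_ifs <;> simp
        simp only [one_add_pow_card_eq_sum_subset, subset_inter_iff, ite_and, hsq]
        conv_lhs => enter [2, e]; rw [sum_comm]
        rw [sum_comm]
    _ ≤ ∑ S : Finset ι, r ^ #S * (((card α : ℝ) / card ι) ^ #S * card (α ⊕ β ≃ ι)) ^ 2 := by
        gcongr with S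
        exact card_subset_inlRange_le S
    _ = (card (α ⊕ β ≃ ι) : ℝ) ^ 2 * ∑ S : Finset ι, (r * ((card α : ℝ) / card ι) ^ 2) ^ #S := by
        rw [mul_sum]
        congr 1 with S
        ring
    _ = (card (α ⊕ β ≃ ι) : ℝ) ^ 2 * (1 + r * ((card α : ℝ) / card ι) ^ 2) ^ card ι := by
        rw [← card_univ (α := ι), one_add_pow_card_eq_sum_subset]
        simp

end Counting

section Strings

variable [Fintype ι] [DecidableEq ι] [Fintype K] [DecidableEq K]

noncomputable def letterDensity (B : Finset K) (J : Finset ι) (i : ι) (v : K) : ℝ :=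
  if i ∈ J then (if v ∈ B then (#B : ℝ)⁻¹ else 0) else (card K : ℝ)⁻¹

noncomputable def restrictedDensity (B : Finset K) (J : Finset ι) (z : ι → K) : ℝ :=
  ∏ i, letterDensity B J i (z i)

lemma restrictedDensity_eq (B : Finset K) (J : Finset ι) (z : ι → K) :
    restrictedDensity B J z
      = if ∀ i ∈ J, z i ∈ B then ((#B : ℝ) ^ #J)⁻¹ * ((card K : ℝ) ^ (card ι - #J))⁻¹
        else 0 := by
  simp only [restrictedDensity, letterDensity]
  rw [prod_ite, Finset.prod_ite_zero, prod_const, prod_const, filter_mem_eq_inter, univ_inter,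
    filter_not, filter_mem_eq_inter, univ_inter, card_sdiff, card_univ]
  split_ifs <;> simp [inv_pow]

variable {B : Finset K}

lemma sum_restrictedDensity (hB : B.Nonempty) (J : Finset ι) :
    ∑ z, restrictedDensity B J z = 1 := by
  simp only [restrictedDensity]
  rw [← Fintype.prod_sum]
  refine prod_eq_one fun i _ => ?_
  have : Nonempty K := ⟨hB.choose⟩
  simp only [letterDensity]
  split_ifs <;> simp [hB.card_pos.ne']

lemma card_pow_mul_sum_restrictedDensity_mul (hB : B.Nonempty) (J J' : Finset ι) :
    (card K : ℝ) ^ card ι * ∑ z, restrictedDensity B J z * restrictedDensity B J' z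
      = ((card K : ℝ) / #B) ^ #(J ∩ J') := by
  have : Nonempty K := ⟨hB.choose⟩
  have hK : (card K : ℝ) ≠ 0 := by positivity
  have hB' : (#B : ℝ) ≠ 0 := by simp [hB.ne_empty]
  calc (card K : ℝ) ^ card ι * ∑ z, restrictedDensity B J z * restrictedDensity B J' z
      = ∏ i, (card K * ∑ v, letterDensity B J i v * letterDensity B J' i v) := by
        simp only [restrictedDensity, ← prod_mul_distrib]
        rw [← Fintype.prod_sum (fun i v => letterDensity B J i v * letterDensity B J' i v),
          prod_mul_distrib, prod_const, card_univ]
    _ = ∏ i, if i ∈ J ∩ J' then (card K : ℝ) / #B else 1 := by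
        refine prod_congr rfl fun i _ => ?_
        by_cases hJ : i ∈ J <;> by_cases hJ' : i ∈ J' <;>
          simp [letterDensity, hJ, hJ'] <;> field_simp
    _ = ((card K : ℝ) / #B) ^ #(J ∩ J') := by
        rw [Fintype.prod_ite_mem, prod_const]

end Strings

section Gluing

variable [Fintype α] [Fintype β] [Fintype ι] [Fintype K'] [Fintype K]
  [DecidableEq α] [DecidableEq β] [DecidableEq ι] [DecidableEq K]

lemma sum_sum_glue_eq_sum_indicator {f : K' → K} (hf : f.Injective) (e : α ⊕ β ≃ ι)
    (F : (ι → K) → ℝ) :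
    ∑ x : α → K', ∑ y : β → K, F (fun i => Sum.elim (fun a => f (x a)) y (e.symm i))
      = ∑ z, if ∀ i ∈ inlRange e, z i ∈ univ.image f then F z else 0 := by
  rw [← Fintype.sum_prod_type']
  refine Fintype.sum_of_injective (fun p i => Sum.elim (fun a => f (p.1 a)) p.2 (e.symm i))
    ?_ _ _ ?_ ?_
  · rintro ⟨x, y⟩ ⟨x', y'⟩ h
    simp only [Prod.mk.injEq]
    constructor
    · funext a
      exact hf (by simpa using congrFun h (e (.inl a)))
    · funext b
      simpa using congrFun h (e (.inr b))
  · intro z hz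
    rw [if_neg]
    contrapose! hz
    choose x hx using fun a => mem_image.1 (hz _ (mem_inlRange.2 ⟨a, rfl⟩))
    refine ⟨(x, fun b => z (e (.inr b))), funext fun i => ?_⟩
    obtain ⟨c, rfl⟩ := e.surjective i
    cases c <;> simp [hx]
  · rintro ⟨x, y⟩
    rw [if_pos]
    rintro _ hi
    obtain ⟨a, rfl⟩ := mem_inlRange.1 hi
    simp

lemma sum_sum_glue_eq_sum_restrictedDensity_mul {f : K' → K} (hf : f.Injective)
    (e : α ⊕ β ≃ ι) (F : (ι → K) → ℝ) :
    ((card K' : ℝ) ^ card α)⁻¹ * ((card K : ℝ) ^ card β)⁻¹ *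
        ∑ x : α → K', ∑ y : β → K, F (fun i => Sum.elim (fun a => f (x a)) y (e.symm i))
      = ∑ z, restrictedDensity (univ.image f) (inlRange e) z * F z := by
  have hβ : card ι - card α = card β := by
    rw [← card_congr e, card_sum, Nat.add_sub_cancel_left]
  rw [sum_sum_glue_eq_sum_indicator hf, mul_sum]
  refine sum_congr rfl fun z _ => ?_
  rw [restrictedDensity_eq, card_image_of_injective _ hf, card_univ, card_inlRange, hβ]
  split_ifs <;> simp

end Gluing

lemma one_add_mul_div_sq_pow_le_exp {r : ℝ} (hr0 : 0 ≤ r) (hr1 : r ≤ 1) (m n : ℕ) :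
    (1 + r * ((m : ℝ) / n) ^ 2) ^ n ≤ Real.exp ((m : ℝ) ^ 2 / n) := by
  calc (1 + r * ((m : ℝ) / n) ^ 2) ^ n ≤ Real.exp (r * ((m : ℝ) / n) ^ 2) ^ n := by
        exact pow_le_pow_left₀ (by positivity)
          (by linarith [Real.add_one_le_exp (r * ((m : ℝ) / n) ^ 2)]) n
    _ = Real.exp (n * (r * ((m : ℝ) / n) ^ 2)) := (Real.exp_nat_mul _ _).symm
    _ ≤ Real.exp ((m : ℝ) ^ 2 / n) := by
        gcongr
        rcases n.eq_zero_or_pos with rfl | hn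
        · simp
        · field_simp
          nlinarith [sq_nonneg (m : ℝ)]

section Mixture

variable [Fintype α] [Fintype β] [Fintype ι] [Fintype K]
  [DecidableEq α] [DecidableEq β] [DecidableEq ι] [DecidableEq K]

variable (α β) in
noncomputable def randomRestrictedDensity (B : Finset K) (z : ι → K) : ℝ :=
  (card (α ⊕ β ≃ ι) : ℝ)⁻¹ * ∑ e : α ⊕ β ≃ ι, restrictedDensity B (inlRange e) z

lemma average_glue_mem_eq_sum_randomRestrictedDensity [Fintype K'] [DecidableEq K'] {f : K' → K}
    (hf : f.Injective) (A : Finset (ι → K)) :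
    (card (α ⊕ β ≃ ι) : ℝ)⁻¹ * ∑ e : α ⊕ β ≃ ι,
        ((card K' : ℝ) ^ card α)⁻¹ * ((card K : ℝ) ^ card β)⁻¹ *
          ∑ x : α → K', ∑ y : β → K,
            (if (fun i => Sum.elim (fun a => f (x a)) y (e.symm i)) ∈ A then (1 : ℝ) else 0)
      = ∑ z ∈ A, randomRestrictedDensity α β (univ.image f) z := by
  have hglue := fun e : α ⊕ β ≃ ι =>
    sum_sum_glue_eq_sum_restrictedDensity_mul hf e (fun z => if z ∈ A then (1 : ℝ) else 0)
  simp only [hglue, randomRestrictedDensity]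
  rw [sum_comm, mul_sum, ← Fintype.sum_ite_mem A]
  refine sum_congr rfl fun z _ => ?_
  split_ifs <;> simp [mul_sum]

variable {B : Finset K}

lemma sum_randomRestrictedDensity [Nonempty (α ⊕ β ≃ ι)] (hB : B.Nonempty) :
    ∑ z : ι → K, randomRestrictedDensity α β B z = 1 := by
  simp only [randomRestrictedDensity, ← mul_sum]
  rw [sum_comm]
  simp [sum_restrictedDensity hB]

lemma card_pow_mul_sum_randomRestrictedDensity_sq_le (hB : B.Nonempty) (hB2 : card K ≤ 2 * #B) :
    (card K : ℝ) ^ card ι * ∑ z : ι → K, randomRestrictedDensity α β B z ^ 2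
      ≤ Real.exp ((card α : ℝ) ^ 2 / card ι) := by
  set N : ℝ := card (α ⊕ β ≃ ι)
  set r : ℝ := (card K : ℝ) / #B - 1
  have hBpos : (0 : ℝ) < #B := by simpa using hB.card_pos
  have hr0 : 0 ≤ r := sub_nonneg.2 ((one_le_div hBpos).2 (by exact_mod_cast card_le_univ B))
  have hr1 : r ≤ 1 := by
    rw [sub_le_iff_le_add, div_le_iff₀ hBpos, one_add_one_eq_two]
    exact_mod_cast hB2
  calc (card K : ℝ) ^ card ι * ∑ z : ι → K, randomRestrictedDensity α β B z ^ 2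
      = N⁻¹ ^ 2 * ∑ e : α ⊕ β ≃ ι, ∑ e' : α ⊕ β ≃ ι, (1 + r) ^ #(inlRange e ∩ inlRange e') := by
        have hsq (z : ι → K) : randomRestrictedDensity α β B z ^ 2 = N⁻¹ ^ 2 *
            ∑ e : α ⊕ β ≃ ι, ∑ e' : α ⊕ β ≃ ι,
              restrictedDensity B (inlRange e) z * restrictedDensity B (inlRange e') z := by
          rw [randomRestrictedDensity, mul_pow, sq (∑ _ : α ⊕ β ≃ ι, _), Fintype.sum_mul_sum]
        simp only [r, add_sub_cancel, ← card_pow_mul_sum_restrictedDensity_mul hB, hsq, mul_sum]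
        rw [sum_comm]
        refine sum_congr rfl fun e _ => ?_
        rw [sum_comm]
        exact sum_congr rfl fun e' _ => sum_congr rfl fun z _ => by ring
    _ ≤ N⁻¹ ^ 2 * (N ^ 2 * (1 + r * ((card α : ℝ) / card ι) ^ 2) ^ card ι) := by
        gcongr
        exact sum_sum_pow_card_inter_inlRange_le hr0
    _ ≤ (1 + r * ((card α : ℝ) / card ι) ^ 2) ^ card ι := by
        rcases eq_or_ne N 0 with hN | hN
        · rw [hN, inv_zero, zero_pow two_ne_zero, zero_mul]
          positivity
        · rw [← mul_assoc, ← mul_pow, inv_mul_cancel₀ hN, one_pow, one_mul]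
    _ ≤ Real.exp ((card α : ℝ) ^ 2 / card ι) := one_add_mul_div_sq_pow_le_exp hr0 hr1 _ _

end Mixture

lemma sq_sum_sub_card_div_card_le {Ω : Type*} [Fintype Ω] {p : Ω → ℝ} (hp : ∑ z, p z = 1)
    (A : Finset Ω) :
    (∑ z ∈ A, p z - #A / card Ω) ^ 2 ≤ card Ω * ∑ z, p z ^ 2 - 1 := by
  have : Nonempty Ω := by
    by_contra h
    rw [not_nonempty_iff] at h
    simp at hp
  have hN : (card Ω : ℝ) ≠ 0 := by positivity
  calc (∑ z ∈ A, p z - #A / card Ω) ^ 2 = (∑ z ∈ A, (p z - (card Ω : ℝ)⁻¹)) ^ 2 := by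
        rw [sum_sub_distrib, sum_const, nsmul_eq_mul, div_eq_mul_inv]
    _ ≤ #A * ∑ z ∈ A, (p z - (card Ω : ℝ)⁻¹) ^ 2 := sq_sum_le_card_mul_sum_sq
    _ ≤ card Ω * ∑ z, (p z - (card Ω : ℝ)⁻¹) ^ 2 := by
        exact mul_le_mul (by exact_mod_cast card_le_univ A)
          (sum_le_sum_of_subset_of_nonneg (subset_univ A) fun _ _ _ => sq_nonneg _)
          (sum_nonneg fun _ _ => sq_nonneg _) (Nat.cast_nonneg _)
    _ = card Ω * ∑ z, p z ^ 2 - 1 := by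
        simp only [sub_sq, sum_add_distrib, sum_sub_distrib, ← sum_mul, ← mul_sum, hp, sum_const,
          card_univ, nsmul_eq_mul]
        field_simp
        ring

lemma exp_sq_div_sub_one_le {m n : ℕ} {η : ℝ} (hη : 0 < η) (hn : (12 / η) ^ 12 ≤ (n : ℝ))
    (hm : (m : ℝ) ≤ (n : ℝ) ^ ((1 : ℝ) / 4)) :
    Real.exp ((m : ℝ) ^ 2 / n) - 1 ≤ η ^ 2 := by
  have hn0 : 0 < (n : ℝ) := lt_of_lt_of_le (by positivity) hn
  have hn1 : 1 ≤ (n : ℝ) := Nat.one_le_cast.2 (Nat.cast_pos.1 hn0)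
  have hm4 : (m : ℝ) ^ 4 ≤ n :=
    calc (m : ℝ) ^ 4 ≤ ((n : ℝ) ^ ((1 : ℝ) / 4)) ^ 4 := by gcongr
      _ = (n : ℝ) := by
        rw [one_div]
        exact_mod_cast Real.rpow_inv_natCast_pow hn0.le (by norm_num : (4 : ℕ) ≠ 0)
  set t := (m : ℝ) ^ 2 / n
  have ht0 : 0 ≤ t := by positivity
  have ht2 : t ^ 2 ≤ 1 / n :=
    calc t ^ 2 = (m : ℝ) ^ 4 / (n : ℝ) ^ 2 := by rw [div_pow, ← pow_mul]
      _ ≤ (n : ℝ) / (n : ℝ) ^ 2 := by gcongr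
      _ = 1 / n := by field_simp
  have hnη : 1 / (n : ℝ) ≤ (η / 12) ^ 12 := by
    rw [show (η / 12) ^ 12 = 1 / (12 / η) ^ 12 by rw [one_div, ← inv_pow, inv_div]]
    exact one_div_le_one_div_of_le (by positivity) hn
  have ht1 : t ≤ 1 := by
    nlinarith [one_div_le_one_div_of_le zero_lt_one hn1]
  have ht6 : t ≤ (η / 12) ^ 6 :=
    (pow_le_pow_iff_left₀ ht0 (by positivity) two_ne_zero).1 (by rw [← pow_mul]; linarith)
  have htη : t ≤ (η / 12) ^ 2 := by
    rcases le_total (η / 12) 1 with h | h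
    · exact ht6.trans (pow_le_pow_of_le_one (by positivity) h (by norm_num))
    · exact ht1.trans (one_le_pow₀ h)
  have hexp := Real.abs_exp_sub_one_le (x := t) (by rwa [abs_of_nonneg ht0])
  rw [abs_of_nonneg ht0] at hexp
  nlinarith [le_abs_self (Real.exp t - 1)]

end RandomRestriction

open RandomRestriction

theorem uniform_with_restricted_coordinates_close_to_uniform_general (k m n : ℕ)
    (hk : 2 ≤ k) (hmn : m ≤ n) (η : ℝ) (hη : 0 < η)
    (hn : (12 / η) ^ (12 : ℕ) ≤ (n : ℝ))
    (hm4 : (m : ℝ) ≤ (n : ℝ) ^ ((1 : ℝ) / 4))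
    (A : Finset (Fin n → Fin k)) :
    |((Fintype.card ((Fin m ⊕ Fin (n - m)) ≃ Fin n) : ℝ))⁻¹ *
        ∑ e : (Fin m ⊕ Fin (n - m)) ≃ Fin n,
          (((k - 1 : ℕ) : ℝ) ^ m)⁻¹ * ((k : ℝ) ^ (n - m))⁻¹ *
            ∑ x : Fin m → Fin (k - 1), ∑ y : Fin (n - m) → Fin k,
              (if (fun i => Sum.elim (fun a => Fin.castLE (Nat.sub_le k 1) (x a)) y
                  (e.symm i)) ∈ A then (1 : ℝ) else 0) -
      (A.card : ℝ) / (k : ℝ) ^ n| ≤ η := by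
  have hf := Fin.castLE_injective (Nat.sub_le k 1)
  set B : Finset (Fin k) := univ.image (Fin.castLE (Nat.sub_le k 1))
  have hB : B.Nonempty := (univ_nonempty_iff.2 ⟨⟨0, by omega⟩⟩).image _
  have hBcard : #B = k - 1 := by rw [card_image_of_injective _ hf, card_univ, Fintype.card_fin]
  have : Nonempty ((Fin m ⊕ Fin (n - m)) ≃ Fin n) :=
    ⟨finSumFinEquiv.trans (finCongr (Nat.add_sub_cancel' hmn))⟩
  have hprob := average_glue_mem_eq_sum_randomRestrictedDensity (α := Fin m)
    (β := Fin (n - m)) (ι := Fin n) hf A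
  have hmoment := card_pow_mul_sum_randomRestrictedDensity_sq_le (α := Fin m)
    (β := Fin (n - m)) (ι := Fin n) hB (by rw [hBcard, Fintype.card_fin]; omega)
  simp only [Fintype.card_fin] at hprob hmoment
  rw [hprob]
  refine abs_le_of_sq_le_sq ?_ hη.le
  calc _ ≤ (k : ℝ) ^ n * ∑ z, randomRestrictedDensity (Fin m) (Fin (n - m)) B z ^ 2 - 1 := by
        simpa using sq_sum_sub_card_div_card_le (sum_randomRestrictedDensity hB) A
    _ ≤ Real.exp ((m : ℝ) ^ 2 / n) - 1 := by linarith
    _ ≤ η ^ 2 := exp_sq_div_sub_one_le hη hn hm4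

/-- Let `k ≥ 2`, `m ≤ n^{1/4}` and `n ≥ (12/η)^12`.  Choose a uniformly random
partition of the coordinates into an `m`-set `J` and its complement (encoded by a
uniformly random bijection `e : Fin m ⊕ Fin (n−m) ≃ Fin n`), a uniformly random
`y ∈ [k]^{[n]∖J}` and a uniformly random `x ∈ [k−1]^J`.  Then the distribution of
the combined string `(x, y) ∈ [k]^n` is within total variation distance `η` of the
uniform distribution; i.e. for every `A ⊆ [k]^n` the probability that `(x, y) ∈ A`
differs from `|A|/kⁿ` by at most `η`. -/
theorem uniform_with_restricted_coordinates_close_to_uniform (k m n : ℕ)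
    (hk : 2 ≤ k) (hm : 0 < m) (hmn : m ≤ n) (η : ℝ) (hη : 0 < η)
    (hn : (12 / η) ^ (12 : ℕ) ≤ (n : ℝ))
    (hm4 : (m : ℝ) ≤ (n : ℝ) ^ ((1 : ℝ) / 4))
    (A : Finset (Fin n → Fin k)) :
    |((Fintype.card ((Fin m ⊕ Fin (n - m)) ≃ Fin n) : ℝ))⁻¹ *
        ∑ e : (Fin m ⊕ Fin (n - m)) ≃ Fin n,
          (((k - 1 : ℕ) : ℝ) ^ m)⁻¹ * ((k : ℝ) ^ (n - m))⁻¹ *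
            ∑ x : Fin m → Fin (k - 1), ∑ y : Fin (n - m) → Fin k,
              (if (fun i => Sum.elim (fun a => Fin.castLE (Nat.sub_le k 1) (x a)) y
                  (e.symm i)) ∈ A then (1 : ℝ) else 0) -
      (A.card : ℝ) / (k : ℝ) ^ n| ≤ η :=
  uniform_with_restricted_coordinates_close_to_uniform_general k m n hk hmn η hη hn hm4 A
end
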